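/- arXiv:2010.03521 — 5 statements merged into one kernel-verified Lean document; each statement's English description precedes it below -/
import Mathlib

section
/- For every real σ < 1/2, the function t ↦ ‖X(σ + it)‖ is strictly monotonically increasing on the interval (0, +∞), and strictly monotonically decreasing on the interval (-∞, 0). -/
noncomputable def X (s : ℂ) : ℂ :=
  (5 / Real.pi : ℂ) ^ ((1 : ℂ) / 2 - s) * Complex.Gamma (1 - s / 2) / Complex.Gamma ((1 + s) / 2)

/-!
With `a = 1 - σ/2` and `b = (1 + σ)/2`, `‖X(σ + it)‖` is a positive constant times
`‖Γ(a + i|t|/2)‖ / ‖Γ(b + i|t|/2)‖`, and `σ < 1/2` means `b < a` (with `a + b = 3/2`).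
By the Euler–Gauss limit `Γ(s) = lim nˢ n! / ∏_{j ≤ n} (s + j)`, the ratio
`‖Γ(a + iy)‖ / ‖Γ(b + iy)‖` is the limit of
`n^(a-b) ∏_{j ≤ n} ‖b + j + iy‖ / ‖a + j + iy‖`, each factor of which increases with `y > 0`
since `|b + j| < |a + j|`. The limit is only monotone; strictness comes from the functional
equation `Γ(s + 1) = s Γ(s)`, which splits off the strictly increasing factor
`‖b + iy‖ / ‖a + iy‖`.
-/

open Complex Filter Finset Set Topology

lemma strictMonoOn_norm_add_mul_I_div {a b : ℝ} (hab : |b| < |a|) :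
    StrictMonoOn (fun y : ℝ => ‖(b : ℂ) + y * I‖ / ‖(a : ℂ) + y * I‖) (Ici 0) := by
  intro y hy y' hy' hyy'
  have hsq : b ^ 2 < a ^ 2 := sq_lt_sq.mpr hab
  have ha : 0 < a ^ 2 := (sq_nonneg b).trans_lt hsq
  have hy2 : y ^ 2 < y' ^ 2 := by nlinarith [mem_Ici.mp hy]
  simp only [norm_add_mul_I, ← Real.sqrt_div' _ (by positivity : 0 ≤ a ^ 2 + y' ^ 2),
    ← Real.sqrt_div' _ (by positivity : 0 ≤ a ^ 2 + y ^ 2)]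
  refine Real.sqrt_lt_sqrt (by positivity) ?_
  rw [div_lt_div_iff₀ (by positivity) (by positivity)]
  nlinarith

lemma ofReal_add_mul_I_add_natCast (x y : ℝ) (j : ℕ) :
    (x : ℂ) + y * I + j = ((x + j : ℝ) : ℂ) + y * I := by
  push_cast; ring

lemma norm_GammaSeq_div_GammaSeq (a b : ℝ) {y : ℝ} (hy : y ≠ 0) {n : ℕ} (hn : n ≠ 0) :
    ‖GammaSeq (a + y * I) n‖ / ‖GammaSeq (b + y * I) n‖ =
      (n : ℝ) ^ (a - b) *
        ∏ j ∈ range (n + 1), ‖((b + j : ℝ) : ℂ) + y * I‖ / ‖((a + j : ℝ) : ℂ) + y * I‖ := by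
  have hne : ∀ x : ℝ, ((x : ℂ) + y * I) ≠ 0 := fun x h => hy (by simpa using congrArg im h)
  have hn' : (0 : ℝ) < n := by positivity
  simp only [GammaSeq, norm_div, norm_mul, norm_natCast_cpow_of_pos (Nat.pos_of_ne_zero hn),
    norm_prod, ofReal_add_mul_I_add_natCast, prod_div_distrib, add_re, ofReal_re, mul_re, I_re,
    I_im, ofReal_im, mul_zero, mul_one, sub_zero, add_zero, Complex.norm_natCast,
    Real.rpow_sub hn']
  have hpa : 0 < ∏ j ∈ range (n + 1), ‖((a + j : ℝ) : ℂ) + y * I‖ :=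
    prod_pos fun j _ => norm_pos_iff.mpr (hne _)
  have hpb : 0 < ∏ j ∈ range (n + 1), ‖((b + j : ℝ) : ℂ) + y * I‖ :=
    prod_pos fun j _ => norm_pos_iff.mpr (hne _)
  have : (0 : ℝ) < n.factorial := by positivity
  have : (0 : ℝ) < (n : ℝ) ^ b := by positivity
  field_simp

lemma norm_Gamma_add_mul_I_pos (x : ℝ) {y : ℝ} (hy : y ≠ 0) :
    0 < ‖Gamma (x + y * I)‖ := by
  refine norm_pos_iff.mpr (Gamma_ne_zero fun m h => hy ?_)
  simpa using congrArg im h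

lemma monotoneOn_norm_Gamma_div {a b : ℝ} (hba : b < a) (hab : 0 < a + b) :
    MonotoneOn (fun y : ℝ => ‖Gamma (a + y * I)‖ / ‖Gamma (b + y * I)‖) (Ioi 0) := by
  intro y hy y' hy' hyy'
  have hseq : ∀ y : ℝ, y ≠ 0 →
      Tendsto (fun n => ‖GammaSeq (a + y * I) n‖ / ‖GammaSeq (b + y * I) n‖) atTop
        (𝓝 (‖Gamma (a + y * I)‖ / ‖Gamma (b + y * I)‖)) := fun y hy =>
    (GammaSeq_tendsto_Gamma _).norm.div (GammaSeq_tendsto_Gamma _).norm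
      (norm_Gamma_add_mul_I_pos b hy).ne'
  refine le_of_tendsto_of_tendsto (hseq y hy.ne') (hseq y' hy'.ne')
    (eventually_atTop.mpr ⟨1, fun n hn => ?_⟩)
  dsimp only
  rw [norm_GammaSeq_div_GammaSeq a b hy.ne' (by omega),
    norm_GammaSeq_div_GammaSeq a b hy'.ne' (by omega)]
  refine mul_le_mul_of_nonneg_left (prod_le_prod (fun j _ => by positivity) fun j _ => ?_)
    (by positivity)
  have hj : |b + j| < |a + j| :=
    (abs_lt.mpr ⟨by linarith [j.cast_nonneg (α := ℝ)], by linarith⟩).trans_le (le_abs_self _)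
  exact (strictMonoOn_norm_add_mul_I_div hj).monotoneOn (mem_Ici.mpr (le_of_lt hy))
    (mem_Ici.mpr (le_of_lt hy')) hyy'

lemma norm_Gamma_add_mul_I_eq_div (x : ℝ) {y : ℝ} (hy : y ≠ 0) :
    ‖Gamma (x + y * I)‖ = ‖Gamma ((x + 1 : ℝ) + y * I)‖ / ‖(x : ℂ) + y * I‖ := by
  have hne : (x : ℂ) + y * I ≠ 0 := fun h => hy (by simpa using congrArg im h)
  rw [show ((x + 1 : ℝ) : ℂ) + y * I = x + y * I + 1 by push_cast; ring, Gamma_add_one _ hne,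
    norm_mul, mul_div_cancel_left₀ _ (norm_ne_zero_iff.mpr hne)]

lemma strictMonoOn_norm_Gamma_div {a b : ℝ} (hba : b < a) (hab : 0 < a + b) :
    StrictMonoOn (fun y : ℝ => ‖Gamma (a + y * I)‖ / ‖Gamma (b + y * I)‖) (Ioi 0) := by
  have hshift : ∀ y : ℝ, y ≠ 0 → ‖Gamma (a + y * I)‖ / ‖Gamma (b + y * I)‖ =
      ‖Gamma ((a + 1 : ℝ) + y * I)‖ / ‖Gamma ((b + 1 : ℝ) + y * I)‖ *
        (‖(b : ℂ) + y * I‖ / ‖(a : ℂ) + y * I‖) := fun y hy => by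
    rw [norm_Gamma_add_mul_I_eq_div a hy, norm_Gamma_add_mul_I_eq_div b hy, div_div_div_comm,
      div_div_eq_mul_div, mul_div_assoc]
  have hmono := monotoneOn_norm_Gamma_div (a := a + 1) (b := b + 1) (by linarith) (by linarith)
  have hstrict := strictMonoOn_norm_add_mul_I_div
    ((abs_lt.mpr ⟨by linarith, hba⟩).trans_le (le_abs_self a))
  intro y hy y' hy' hyy'
  dsimp only
  rw [hshift y hy.ne', hshift y' hy'.ne']
  refine mul_lt_mul' (hmono hy hy' hyy'.le)
    (hstrict (mem_Ici.mpr hy.le) (mem_Ici.mpr hy'.le) hyy') (by positivity)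
    (div_pos (norm_Gamma_add_mul_I_pos _ hy'.ne') (norm_Gamma_add_mul_I_pos _ hy'.ne'))

lemma norm_Gamma_add_mul_I_abs (x y : ℝ) :
    ‖Gamma (x + |y| * I)‖ = ‖Gamma (x + y * I)‖ := by
  rcases abs_choice y with h | h
  · rw [h]
  · rw [h, ← norm_conj, ← Gamma_conj]
    congr 2
    simp

lemma norm_X (σ t : ℝ) : ‖X (σ + t * I)‖ = (5 / Real.pi) ^ ((1 : ℝ) / 2 - σ) *
    (‖Gamma ((1 - σ / 2 : ℝ) + (|t| / 2 : ℝ) * I)‖ /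
      ‖Gamma (((1 + σ) / 2 : ℝ) + (|t| / 2 : ℝ) * I)‖) := by
  have hbase : (5 / Real.pi : ℂ) = ((5 / Real.pi : ℝ) : ℂ) := by push_cast; rfl
  have hleft : 1 - (σ + t * I) / 2 = ((1 - σ / 2 : ℝ) : ℂ) + (-(t / 2) : ℝ) * I := by
    push_cast; ring
  have hright : (1 + (σ + t * I)) / 2 = (((1 + σ) / 2 : ℝ) : ℂ) + (t / 2 : ℝ) * I := by
    push_cast; ring
  rw [X, norm_div, norm_mul, mul_div_assoc, hbase,
    norm_cpow_eq_rpow_re_of_pos (by positivity), hleft, hright,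
    ← norm_Gamma_add_mul_I_abs _ (-(t / 2)), ← norm_Gamma_add_mul_I_abs _ (t / 2), abs_neg,
    abs_div, abs_two]
  simp

theorem stmt_6 (σ : ℝ) (hσ : σ < 1 / 2) :
    StrictMonoOn (fun t : ℝ => ‖X ((σ : ℂ) + (t : ℂ) * Complex.I)‖) (Set.Ioi 0) ∧
    StrictAntiOn (fun t : ℝ => ‖X ((σ : ℂ) + (t : ℂ) * Complex.I)‖) (Set.Iio 0) := by
  have hratio := strictMonoOn_norm_Gamma_div (a := 1 - σ / 2) (b := (1 + σ) / 2)
    (by linarith) (by linarith)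
  have hC : 0 < (5 / Real.pi) ^ ((1 : ℝ) / 2 - σ) := by positivity
  simp only [norm_X]
  constructor
  · intro t (ht : 0 < t) t' (ht' : 0 < t') htt'
    dsimp only
    rw [abs_of_pos ht, abs_of_pos ht']
    exact mul_lt_mul_of_pos_left (hratio (half_pos ht) (half_pos ht') (by linarith)) hC
  · intro t (ht : t < 0) t' (ht' : t' < 0) htt'
    dsimp only
    rw [abs_of_neg ht, abs_of_neg ht']
    exact mul_lt_mul_of_pos_left
      (hratio (half_pos (neg_pos.mpr ht')) (half_pos (neg_pos.mpr ht)) (by linarith)) hC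
end

section
/- For every real σ and every real t ≠ 0, the function u ↦ ‖X(σ + iu)‖ is differentiable at t with derivative equal to the (convergent) series ∑_{n=1}^{∞} 8·t·(1/2 - σ)·(n - 1/4)·‖X(σ + it)‖ / (‖it + 2n + σ - 1‖² · ‖it + 2n - σ‖²). -/
/-!
On the vertical line, `‖X (σ + u * I)‖ = (5/π)^(1/2 - σ) ‖Γ((2 - σ - iu)/2)‖ / ‖Γ((1 + σ + iu)/2)‖`.
By Euler's limit `Γ z = lim GammaSeq z n`, off the real axis `log ‖Γ(x + iv)‖` is the limit of
`x log n + log n! - ½ ∑_{j ≤ n} log ((x + j)² + v²)`, whose `v`-derivatives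
`-∑_{j ≤ n} v / ((x + j)² + v²)` converge uniformly near any `v ≠ 0`; so `log ‖Γ(x + iv)‖` can be
differentiated termwise. The two Gamma factors then give the logarithmic derivative of `‖X‖` as
`∑ (t / ((2j + 1 + σ)² + t²) - t / ((2j + 2 - σ)² + t²))`, and since
`(2j + 2 - σ)² - (2j + 1 + σ)² = 8 (1/2 - σ) (j + 3/4)`, its summands are those of the theorem
divided by `‖X (σ + t * I)‖`.
-/

open Complex Filter Topology Finset

section VerticalLine

variable (x : ℝ)

theorem summable_inv_add_sq_add_sq (m : ℝ) :
    Summable fun j : ℕ => ((x + j) ^ 2 + m ^ 2)⁻¹ := by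
  refine ((Real.summable_one_div_nat_add_rpow x 2).2 one_lt_two).of_norm_bounded_eventually_nat ?_
  filter_upwards [eventually_gt_atTop ⌈|x|⌉₊] with j hj
  have hxj : 0 < x + j := by
    linarith [Nat.lt_of_ceil_lt hj, neg_abs_le x]
  rw [Real.norm_of_nonneg (by positivity), add_comm (j : ℝ), abs_of_pos hxj, Real.rpow_two, one_div]
  exact inv_anti₀ (by positivity) (le_add_of_nonneg_right (sq_nonneg m))

theorem Gamma_add_mul_I_ne_zero {v : ℝ} (hv : v ≠ 0) : Gamma (x + v * I) ≠ 0 :=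
  Gamma_ne_zero fun m hm => hv (by simpa using congrArg im hm)

theorem log_norm_add_mul_I_add_natCast (v : ℝ) (j : ℕ) :
    Real.log ‖(x + v * I) + j‖ = Real.log ((x + j) ^ 2 + v ^ 2) / 2 := by
  rw [show (x + v * I : ℂ) + j = ((x + j : ℝ) : ℂ) + v * I by push_cast; ring, norm_add_mul_I,
    Real.log_sqrt (by positivity)]

theorem log_norm_GammaSeq_add_mul_I {v : ℝ} (hv : v ≠ 0) {n : ℕ} (hn : n ≠ 0) :
    Real.log ‖GammaSeq (x + v * I) n‖ = x * Real.log n + Real.log n.factorial -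
      (∑ j ∈ range (n + 1), Real.log ((x + j) ^ 2 + v ^ 2)) / 2 := by
  have hfac : (n.factorial : ℝ) ≠ 0 := by positivity
  have hpow : ((n : ℝ) ^ x) ≠ 0 := by positivity
  have hfactor : ∀ j ∈ range (n + 1), ‖(x + v * I : ℂ) + j‖ ≠ 0 := fun j _ =>
    norm_ne_zero_iff.2 fun h => hv (by simpa using congrArg im h)
  rw [GammaSeq, norm_div, norm_mul, norm_natCast_cpow_of_pos (Nat.pos_of_ne_zero hn), norm_prod,
    Complex.norm_natCast, show (x + v * I : ℂ).re = x by simp,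
    Real.log_div (mul_ne_zero hpow hfac) (prod_ne_zero_iff.2 hfactor), Real.log_mul hpow hfac, Real.log_prod hfactor, Real.log_rpow (by positivity), sum_div]
  simp [log_norm_add_mul_I_add_natCast]

theorem hasDerivAt_sum_log_add_sq_add_sq (n : ℕ) {v : ℝ} (hv : v ≠ 0) :
    HasDerivAt (fun w => (∑ j ∈ range n, Real.log ((x + j) ^ 2 + w ^ 2)) / 2)
      (∑ j ∈ range n, v / ((x + j) ^ 2 + v ^ 2)) v := by
  simp_rw [sum_div]
  refine HasDerivAt.fun_sum fun j _ => ?_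
  have hpos : 0 < (x + j) ^ 2 + v ^ 2 := by positivity
  refine ((((hasDerivAt_pow 2 v).const_add ((x + j) ^ 2)).log hpos.ne').div_const 2).congr_deriv ?_
  field_simp
  ring

theorem hasDerivAt_log_norm_Gamma_add_mul_I {u : ℝ} (hu : u ≠ 0) :
    HasDerivAt (fun v : ℝ => Real.log ‖Gamma (x + v * I)‖)
      (-∑' j : ℕ, u / ((x + j) ^ 2 + u ^ 2)) u := by
  have hball : ∀ v ∈ Metric.ball u (|u| / 2), |u| / 2 < |v| ∧ |v| < 3 * (|u| / 2) := by
    intro v hv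
    rw [Metric.mem_ball, Real.dist_eq] at hv
    constructor <;>
      linarith [abs_sub_abs_le_abs_sub u v, abs_sub_abs_le_abs_sub v u, abs_sub_comm u v]
  have hne : ∀ v ∈ Metric.ball u (|u| / 2), v ≠ 0 := fun v hv =>
    abs_pos.1 ((half_pos (abs_pos.2 hu)).trans (hball v hv).1)
  have hunif : TendstoUniformlyOn (fun n v => ∑ j ∈ range (n + 1), v / ((x + j) ^ 2 + v ^ 2))
      (fun v => ∑' j : ℕ, v / ((x + j) ^ 2 + v ^ 2)) atTop (Metric.ball u (|u| / 2)) := by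
    refine fun s hs => (tendsto_add_atTop_nat 1).eventually (tendstoUniformlyOn_tsum_nat
      ((summable_inv_add_sq_add_sq x (u / 2)).mul_left (3 * (|u| / 2))) (fun j v hv => ?_) s hs)
    obtain ⟨hlow, hup⟩ := hball v hv
    have hsq : (u / 2) ^ 2 ≤ v ^ 2 := by
      rw [← sq_abs v, ← sq_abs (u / 2), abs_div, abs_two]; gcongr
    have hv2 : 0 < (u / 2) ^ 2 := by rw [div_pow]; positivity
    have hv0 := hne v hv
    rw [Real.norm_eq_abs, abs_div, abs_of_pos (by positivity : 0 < (x + j) ^ 2 + v ^ 2),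
      div_eq_mul_inv]
    gcongr
  refine hasDerivAt_of_tendstoUniformlyOn
    (f := fun (n : ℕ) (v : ℝ) => x * Real.log n + Real.log n.factorial -
      (∑ j ∈ range (n + 1), Real.log ((x + j) ^ 2 + v ^ 2)) / 2)
    Metric.isOpen_ball hunif.neg ?_ ?_ (Metric.mem_ball_self (half_pos (abs_pos.2 hu)))
  · exact Eventually.of_forall fun n v hv =>
      (hasDerivAt_sum_log_add_sq_add_sq x (n + 1) (hne v hv)).const_sub _
  · intro v hv
    have hG := Gamma_add_mul_I_ne_zero x (hne v hv)
    refine (((GammaSeq_tendsto_Gamma _).norm).log (norm_ne_zero_iff.2 hG)).congr' ?_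
    filter_upwards [eventually_ne_atTop 0] with n hn
    exact log_norm_GammaSeq_add_mul_I x (hne v hv) hn

end VerticalLine

section HalfVerticalLine

variable (y : ℝ)

theorem summable_div_add_two_mul_sq_add_sq (v : ℝ) :
    Summable fun j : ℕ => v / ((y + 2 * j) ^ 2 + v ^ 2) := by
  refine ((summable_inv_add_sq_add_sq (y / 2) (v / 2)).mul_left (v / 4)).congr fun j => ?_
  field_simp
  ring

theorem Gamma_half_add_mul_I_ne_zero {v : ℝ} (hv : v ≠ 0) : Gamma ((y + v * I) / 2) ≠ 0 :=
  Gamma_ne_zero fun m hm => hv (by simpa using congrArg im hm)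

theorem hasDerivAt_log_norm_Gamma_half_add_mul_I {u : ℝ} (hu : u ≠ 0) :
    HasDerivAt (fun v : ℝ => Real.log ‖Gamma ((y + v * I) / 2)‖)
      (-∑' j : ℕ, u / ((y + 2 * j) ^ 2 + u ^ 2)) u := by
  have h := (hasDerivAt_log_norm_Gamma_add_mul_I (y / 2) (div_ne_zero hu two_ne_zero)).comp u
    ((hasDerivAt_id u).div_const 2)
  have hhalf : ∀ j : ℕ,
      u / 2 / ((y / 2 + j) ^ 2 + (u / 2) ^ 2) = 2 * (u / ((y + 2 * j) ^ 2 + u ^ 2)) :=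
    fun j => by field_simp
  simp only [Function.comp_def, id, hhalf, tsum_mul_left] at h
  have hfun : (fun v : ℝ => Real.log ‖Gamma ((y + v * I) / 2)‖) =
      fun v : ℝ => Real.log ‖Gamma (↑(y / 2) + ↑(v / 2) * I)‖ := by
    funext v; push_cast; ring_nf
  rw [hfun]
  exact h.congr_deriv (by ring)

end HalfVerticalLine

theorem HasDerivAt.of_log {f : ℝ → ℝ} {x d : ℝ} (hf : HasDerivAt (fun y => Real.log (f y)) d x)
    (hpos : ∀ᶠ y in 𝓝 x, 0 < f y) : HasDerivAt f (f x * d) x := by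
  have h := hf.exp
  rw [Real.exp_log hpos.self_of_nhds] at h
  exact h.congr_of_eventuallyEq (hpos.mono fun y hy => (Real.exp_log hy).symm)

theorem norm_X_add_mul_I (σ u : ℝ) :
    ‖X (σ + u * I)‖ = (5 / Real.pi) ^ (1 / 2 - σ) *
      ‖Gamma ((↑(2 - σ) + ↑(-u) * I) / 2)‖ / ‖Gamma ((↑(1 + σ) + u * I) / 2)‖ := by
  rw [X, norm_div, norm_mul, show (5 / Real.pi : ℂ) = ((5 / Real.pi : ℝ) : ℂ) by push_cast; rfl,
    norm_cpow_eq_rpow_re_of_pos (by positivity)]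
  congr 4
  · simp
  · push_cast; ring
  · push_cast; ring

theorem norm_X_add_mul_I_pos (σ : ℝ) {u : ℝ} (hu : u ≠ 0) : 0 < ‖X (σ + u * I)‖ := by
  rw [norm_X_add_mul_I]
  have h₁ := Gamma_half_add_mul_I_ne_zero (2 - σ) (neg_ne_zero.2 hu)
  have h₂ := Gamma_half_add_mul_I_ne_zero (1 + σ) hu
  positivity

theorem hasDerivAt_log_norm_X (σ : ℝ) {t : ℝ} (ht : t ≠ 0) :
    HasDerivAt (fun u : ℝ => Real.log ‖X (σ + u * I)‖)
      (∑' j : ℕ, (t / ((1 + σ + 2 * j) ^ 2 + t ^ 2) - t / ((2 - σ + 2 * j) ^ 2 + t ^ 2))) t := by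
  have hΓ₁ := (hasDerivAt_log_norm_Gamma_half_add_mul_I (2 - σ) (neg_ne_zero.2 ht)).comp t
    (hasDerivAt_neg t)
  have hΓ₂ := hasDerivAt_log_norm_Gamma_half_add_mul_I (1 + σ) ht
  have h := (hΓ₁.sub hΓ₂).const_add (Real.log ((5 / Real.pi) ^ (1 / 2 - σ)))
  simp only [neg_sq, neg_div, tsum_neg] at h
  rw [(summable_div_add_two_mul_sq_add_sq _ t).tsum_sub (summable_div_add_two_mul_sq_add_sq _ t)]
  refine (h.congr_deriv (by ring)).congr_of_eventuallyEq ?_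
  filter_upwards [eventually_ne_nhds ht] with u hu
  have h₁ := Gamma_half_add_mul_I_ne_zero (2 - σ) (neg_ne_zero.2 hu)
  have h₂ := Gamma_half_add_mul_I_ne_zero (1 + σ) hu
  rw [norm_X_add_mul_I, Real.log_div (by positivity) (by positivity), Real.log_mul (by positivity)
    (by positivity)]
  simp only [Pi.sub_apply, Function.comp_apply]
  ring

theorem sq_norm_I_mul_add (a t : ℝ) : ‖I * t + a‖ ^ 2 = a ^ 2 + t ^ 2 := by
  rw [Complex.sq_norm, add_comm, mul_comm, normSq_add_mul_I]

theorem stmt_8 (σ t : ℝ) (ht : t ≠ 0) :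
    Summable (fun n : ℕ =>
      8 * t * (1 / 2 - σ) * (((n : ℝ) + 1) - 1 / 4) * ‖X ((σ : ℂ) + (t : ℂ) * Complex.I)‖ /
        (‖Complex.I * (t : ℂ) + 2 * ((n : ℂ) + 1) + (σ : ℂ) - 1‖ ^ 2 *
          ‖Complex.I * (t : ℂ) + 2 * ((n : ℂ) + 1) - (σ : ℂ)‖ ^ 2)) ∧
    HasDerivAt (fun u : ℝ => ‖X ((σ : ℂ) + (u : ℂ) * Complex.I)‖)
      (∑' n : ℕ,
        8 * t * (1 / 2 - σ) * (((n : ℝ) + 1) - 1 / 4) * ‖X ((σ : ℂ) + (t : ℂ) * Complex.I)‖ /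
          (‖Complex.I * (t : ℂ) + 2 * ((n : ℂ) + 1) + (σ : ℂ) - 1‖ ^ 2 *
            ‖Complex.I * (t : ℂ) + 2 * ((n : ℂ) + 1) - (σ : ℂ)‖ ^ 2)) t := by
  have hterm : ∀ n : ℕ,
      8 * t * (1 / 2 - σ) * (((n : ℝ) + 1) - 1 / 4) * ‖X ((σ : ℂ) + (t : ℂ) * Complex.I)‖ /
        (‖Complex.I * (t : ℂ) + 2 * ((n : ℂ) + 1) + (σ : ℂ) - 1‖ ^ 2 *
          ‖Complex.I * (t : ℂ) + 2 * ((n : ℂ) + 1) - (σ : ℂ)‖ ^ 2) =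
      ‖X (σ + t * I)‖ *
        (t / ((1 + σ + 2 * n) ^ 2 + t ^ 2) - t / ((2 - σ + 2 * n) ^ 2 + t ^ 2)) := by
    intro n
    rw [show I * t + 2 * ((n : ℂ) + 1) + σ - 1 = I * t + ((1 + σ + 2 * n : ℝ) : ℂ) by
        push_cast; ring,
      show I * t + 2 * ((n : ℂ) + 1) - σ = I * t + ((2 - σ + 2 * n : ℝ) : ℂ) by push_cast; ring,
      sq_norm_I_mul_add, sq_norm_I_mul_add]
    field_simp
    ring
  have hsum := (summable_div_add_two_mul_sq_add_sq (1 + σ) t).sub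
    (summable_div_add_two_mul_sq_add_sq (2 - σ) t)
  refine ⟨(hsum.mul_left _).congr fun n => (hterm n).symm, ?_⟩
  rw [tsum_congr hterm, tsum_mul_left]
  exact (hasDerivAt_log_norm_X σ ht).of_log
    ((eventually_ne_nhds ht).mono fun u hu => norm_X_add_mul_I_pos σ hu)
end

section
/- For every real σ and every real t ≠ 0, the function u ↦ ‖Γ(1 - (σ + iu)/2)‖ is differentiable at t with derivative equal to -t · ∑_{n=1}^{∞} ‖Γ(1 - (σ + it)/2)‖ / ‖σ + it - 2n‖². In particular this derivative is negative for t > 0 and positive for t < 0, so t ↦ ‖Γ(1 - (σ + it)/2)‖ is strictly decreasing on (0, ∞) and strictly increasing on (-∞, 0). -/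
/-!
For `x > 0`, Euler's limit formula `Γ(s) = lim n^s n! / (s (s+1) ⋯ (s+n))` gives
`log |Γ(x + iy)| = log Γ(x) - ∑ₙ log (1 + y² / (x + n)²) / 2`, a series that may be
differentiated termwise in `y`, so `∂_y log |Γ(x + iy)| = -∑ₙ y / ((x + n)² + y²)`.
For `y ≠ 0` the recurrence `Γ(s + 1) = s Γ(s)` carries this formula from `x + 1` down to `x`,
hence to every real `x`. Substituting `s = 1 - (σ + it)/2`, i.e. `x = 1 - σ/2`, `y = -t/2`, turns
the series into `t ∑ₙ 1 / |σ + it - 2(n + 1)|²`, whose terms are positive.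
-/

open Complex Filter Topology

lemma summable_inv_add_sq_add (a : ℝ) {b : ℝ} (hb : 0 ≤ b) :
    Summable fun n : ℕ => ((a + n) ^ 2 + b)⁻¹ := by
  refine .of_norm_bounded_eventually_nat
    ((Real.summable_one_div_nat_add_rpow a 2).mpr one_lt_two) ?_
  filter_upwards [eventually_gt_atTop ⌈-a⌉₊] with n hn
  have hpos : 0 < a + n := by linarith [Nat.lt_of_ceil_lt hn]
  rw [Real.norm_of_nonneg (by positivity), Real.rpow_two, sq_abs, one_div, add_comm (n : ℝ)]
  exact inv_anti₀ (by positivity) (le_add_of_nonneg_right hb)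

lemma sqrt_sq_add_sq_eq_mul {c : ℝ} (hc : 0 < c) (y : ℝ) :
    √(c ^ 2 + y ^ 2) = c * √(1 + y ^ 2 / c ^ 2) := by
  rw [← Real.sqrt_sq hc.le, ← Real.sqrt_mul (sq_nonneg c), Real.sqrt_sq hc.le]
  congr 1
  field_simp

lemma norm_GammaSeq_ofReal_add_mul_I {x : ℝ} (hx : 0 < x) (y : ℝ) {n : ℕ} (hn : n ≠ 0) :
    ‖GammaSeq (x + y * I) n‖ =
      Real.GammaSeq x n * ∏ j ∈ Finset.range (n + 1), (√(1 + y ^ 2 / (x + j) ^ 2))⁻¹ := by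
  have hre : (x + y * I : ℂ).re = x := by simp
  have hnorm (j : ℕ) : ‖(x + y * I : ℂ) + j‖ = (x + j) * √(1 + y ^ 2 / (x + j) ^ 2) := by
    rw [show (x + y * I : ℂ) + j = ((x + j : ℝ) : ℂ) + y * I by push_cast; ring,
      norm_add_mul_I, sqrt_sq_add_sq_eq_mul (by positivity)]
  rw [GammaSeq, Real.GammaSeq, norm_div, norm_mul, norm_prod,
    Finset.prod_congr rfl fun j _ => hnorm j, Finset.prod_mul_distrib, Finset.prod_inv_distrib,
    norm_natCast_cpow_of_pos (Nat.pos_of_ne_zero hn), hre, Complex.norm_natCast]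
  ring

lemma hasSum_log_one_add_sq_div {x : ℝ} (hx : 0 < x) (y : ℝ) :
    HasSum (fun n : ℕ => Real.log (1 + y ^ 2 / (x + n) ^ 2) / 2)
      (Real.log (Real.Gamma x) - Real.log ‖Gamma (x + y * I)‖) := by
  have hΓx : 0 < Real.Gamma x := Real.Gamma_pos_of_pos hx
  have hΓz : ‖Gamma (x + y * I)‖ ≠ 0 :=
    norm_ne_zero_iff.2 (Gamma_ne_zero_of_re_pos (by simpa using hx))
  -- the terms are nonnegative, so convergence of the partial sums already gives the `HasSum`
  rw [hasSum_iff_tendsto_nat_of_nonneg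
    (fun n => div_nonneg (Real.log_nonneg (le_add_of_nonneg_right (by positivity))) zero_le_two),
    ← tendsto_add_atTop_iff_nat 1]
  refine (((Real.GammaSeq_tendsto_Gamma x).log hΓx.ne').sub
    ((GammaSeq_tendsto_Gamma _).norm.log hΓz)).congr' ?_
  filter_upwards [eventually_ne_atTop 0] with n hn
  have hseq : 0 < Real.GammaSeq x n := by unfold Real.GammaSeq; positivity
  rw [norm_GammaSeq_ofReal_add_mul_I hx y hn, Real.log_mul hseq.ne' (by positivity),
    Real.log_prod (fun j _ => by positivity)]
  simp only [Real.log_inv, Finset.sum_neg_distrib]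
  rw [Finset.sum_congr rfl fun j _ => Real.log_sqrt (by positivity)]
  ring

lemma hasDerivAt_log_one_add_sq_div {c : ℝ} (hc : c ≠ 0) (v : ℝ) :
    HasDerivAt (fun w : ℝ => Real.log (1 + w ^ 2 / c ^ 2) / 2) (v / (c ^ 2 + v ^ 2)) v := by
  have h := (((hasDerivAt_pow 2 v).div_const (c ^ 2)).const_add 1).log (by positivity)
  refine (h.div_const 2).congr_deriv ?_
  field_simp
  ring

lemma hasDerivAt_log_norm_Gamma_ofReal_add_mul_I_of_pos {x : ℝ} (hx : 0 < x) (y : ℝ) :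
    HasDerivAt (fun v : ℝ => Real.log ‖Gamma (x + v * I)‖)
      (-∑' n : ℕ, y / ((x + n) ^ 2 + y ^ 2)) y := by
  have hfun : (fun v : ℝ => Real.log ‖Gamma (x + v * I)‖) =
      fun v => Real.log (Real.Gamma x) - ∑' n : ℕ, Real.log (1 + v ^ 2 / (x + n) ^ 2) / 2 :=
    funext fun v => by rw [(hasSum_log_one_add_sq_div hx v).tsum_eq]; ring
  rw [hfun]
  refine (hasDerivAt_tsum_of_isPreconnected (u := fun n : ℕ => (|y| + 1) * ((x + n) ^ 2 + 0)⁻¹)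
    ((summable_inv_add_sq_add x le_rfl).mul_left _) Metric.isOpen_ball
    (convex_ball y 1).isPreconnected
    (fun n v _ => hasDerivAt_log_one_add_sq_div (by positivity) v) (fun n v hv => ?_)
    (Metric.mem_ball_self one_pos) (hasSum_log_one_add_sq_div hx y).summable
    (Metric.mem_ball_self one_pos)).const_sub _
  have hv' : |v| ≤ |y| + 1 := by
    have := abs_sub_abs_le_abs_sub v y
    rw [Metric.mem_ball, Real.dist_eq] at hv
    linarith
  have hxn : 0 < x + n := by positivity
  rw [Real.norm_eq_abs, abs_div, abs_of_pos (by positivity : 0 < (x + n) ^ 2 + v ^ 2), add_zero,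
    ← div_eq_mul_inv]
  calc |v| / ((x + n) ^ 2 + v ^ 2) ≤ |v| / (x + n) ^ 2 :=
        div_le_div_of_nonneg_left (abs_nonneg v) (by positivity)
          (le_add_of_nonneg_right (sq_nonneg v))
    _ ≤ (|y| + 1) / (x + n) ^ 2 := by gcongr

lemma Gamma_ofReal_add_mul_I_ne_zero (x : ℝ) {y : ℝ} (hy : y ≠ 0) : Gamma (x + y * I) ≠ 0 :=
  Gamma_ne_zero fun m h => hy (by simpa using congrArg im h)

lemma log_norm_Gamma_eq_log_norm_Gamma_add_one_sub (x : ℝ) {y : ℝ} (hy : y ≠ 0) :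
    Real.log ‖Gamma (x + y * I)‖ =
      Real.log ‖Gamma ((x + 1 : ℝ) + y * I)‖ - Real.log (x ^ 2 + y ^ 2) / 2 := by
  have hz : (x + y * I : ℂ) ≠ 0 := fun h => hy (by simpa using congrArg im h)
  rw [show ((x + 1 : ℝ) : ℂ) + y * I = (x + y * I) + 1 by push_cast; ring, Gamma_add_one _ hz,
    norm_mul, Real.log_mul (norm_ne_zero_iff.2 hz)
      (norm_ne_zero_iff.2 (Gamma_ofReal_add_mul_I_ne_zero x hy)),
    norm_add_mul_I, Real.log_sqrt (by positivity)]
  ring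

lemma hasDerivAt_log_sq_add_sq_div_two (x : ℝ) {y : ℝ} (hy : y ≠ 0) :
    HasDerivAt (fun v : ℝ => Real.log (x ^ 2 + v ^ 2) / 2) (y / (x ^ 2 + y ^ 2)) y := by
  refine ((((hasDerivAt_pow 2 y).const_add (x ^ 2)).log (by positivity)).div_const 2).congr_deriv ?_
  field_simp
  ring

theorem hasDerivAt_log_norm_Gamma_ofReal_add_mul_I (x : ℝ) {y : ℝ} (hy : y ≠ 0) :
    HasDerivAt (fun v : ℝ => Real.log ‖Gamma (x + v * I)‖)
      (-∑' n : ℕ, y / ((x + n) ^ 2 + y ^ 2)) y := by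
  obtain ⟨m, hm⟩ := exists_nat_gt (-x)
  induction m generalizing x with
  | zero => exact hasDerivAt_log_norm_Gamma_ofReal_add_mul_I_of_pos (by simpa using hm) y
  | succ m ih =>
    have hshift := ih (x + 1) (by push_cast at hm; linarith)
    refine ((hshift.sub (hasDerivAt_log_sq_add_sq_div_two x hy)).congr_of_eventuallyEq ?_
      ).congr_deriv ?_
    · filter_upwards [eventually_ne_nhds hy] with v hv
        using log_norm_Gamma_eq_log_norm_Gamma_add_one_sub x hv
    · have hsum : Summable fun n : ℕ => y / ((x + n) ^ 2 + y ^ 2) := by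
        simpa only [div_eq_mul_inv] using (summable_inv_add_sq_add x (sq_nonneg y)).mul_left y
      rw [hsum.tsum_eq_zero_add]
      simp only [Nat.cast_zero, add_zero, Nat.cast_add_one, ← add_assoc,
        add_right_comm x _ (1 : ℝ)]
      ring

theorem hasDerivAt_norm_Gamma_ofReal_add_mul_I (x : ℝ) {y : ℝ} (hy : y ≠ 0) :
    HasDerivAt (fun v : ℝ => ‖Gamma (x + v * I)‖)
      (-‖Gamma (x + y * I)‖ * ∑' n : ℕ, y / ((x + n) ^ 2 + y ^ 2)) y := by
  refine ((hasDerivAt_log_norm_Gamma_ofReal_add_mul_I x hy).exp.congr_of_eventuallyEq ?_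
    ).congr_deriv ?_
  · filter_upwards [eventually_ne_nhds hy] with v hv
    exact (Real.exp_log (norm_pos_iff.2 (Gamma_ofReal_add_mul_I_ne_zero x hv))).symm
  · rw [Real.exp_log (norm_pos_iff.2 (Gamma_ofReal_add_mul_I_ne_zero x hy))]
    ring

lemma one_sub_ofReal_add_mul_I_div_two (σ u : ℝ) :
    1 - ((σ : ℂ) + u * I) / 2 = ((1 - σ / 2 : ℝ) : ℂ) + ((-u / 2 : ℝ) : ℂ) * I := by
  push_cast
  ring

lemma norm_sub_two_mul_nat_add_one_sq (σ t : ℝ) (n : ℕ) :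
    ‖(σ : ℂ) + t * I - 2 * ((n : ℂ) + 1)‖ ^ 2 =
      4 * ((1 - σ / 2 + n) ^ 2 + (-t / 2) ^ 2) := by
  rw [show (σ : ℂ) + t * I - 2 * ((n : ℂ) + 1) = ((σ - 2 * n - 2 : ℝ) : ℂ) + t * I by
      push_cast; ring,
    norm_add_mul_I, Real.sq_sqrt (by positivity)]
  ring

lemma hasDerivAt_norm_Gamma_one_sub_half (σ : ℝ) {t : ℝ} (ht : t ≠ 0) :
    HasDerivAt (fun u : ℝ => ‖Gamma (1 - ((σ : ℂ) + (u : ℂ) * I) / 2)‖)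
      (-t * ∑' n : ℕ, ‖Gamma (1 - ((σ : ℂ) + (t : ℂ) * I) / 2)‖ /
        ‖(σ : ℂ) + (t : ℂ) * I - 2 * ((n : ℂ) + 1)‖ ^ 2) t := by
  have hfun : (fun u : ℝ => ‖Gamma (1 - ((σ : ℂ) + u * I) / 2)‖) =
      (fun v : ℝ => ‖Gamma (((1 - σ / 2 : ℝ) : ℂ) + v * I)‖) ∘ fun u => -u / 2 :=
    funext fun u => by rw [Function.comp_apply, one_sub_ofReal_add_mul_I_div_two]
  rw [hfun]
  refine ((hasDerivAt_norm_Gamma_ofReal_add_mul_I _ (by simpa using ht)).comp t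
    ((hasDerivAt_neg t).div_const 2)).congr_deriv ?_
  simp_rw [← one_sub_ofReal_add_mul_I_div_two, norm_sub_two_mul_nat_add_one_sq, div_eq_mul_inv,
    mul_inv, tsum_mul_left]
  ring

lemma tsum_norm_Gamma_div_pos (σ : ℝ) {t : ℝ} (ht : t ≠ 0) :
    0 < ∑' n : ℕ, ‖Gamma (1 - ((σ : ℂ) + (t : ℂ) * I) / 2)‖ /
      ‖(σ : ℂ) + (t : ℂ) * I - 2 * ((n : ℂ) + 1)‖ ^ 2 := by
  have ht' : -t / 2 ≠ 0 := by simpa using ht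
  have hG : 0 < ‖Gamma (1 - ((σ : ℂ) + t * I) / 2)‖ := by
    rw [one_sub_ofReal_add_mul_I_div_two]
    exact norm_pos_iff.2 (Gamma_ofReal_add_mul_I_ne_zero _ ht')
  have hsum := (summable_inv_add_sq_add (1 - σ / 2) (sq_nonneg (-t / 2))).mul_left
    (‖Gamma (1 - ((σ : ℂ) + t * I) / 2)‖ / 4)
  simp_rw [norm_sub_two_mul_nat_add_one_sq]
  refine (hsum.congr fun n => by simp only [div_eq_mul_inv, mul_inv]; ring).tsum_pos
    (fun n => by positivity) 0 (div_pos hG (by positivity))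

theorem stmt_9 (σ : ℝ) :
    (∀ t : ℝ, t ≠ 0 →
      HasDerivAt (fun u : ℝ => ‖Complex.Gamma (1 - ((σ : ℂ) + (u : ℂ) * Complex.I) / 2)‖)
        (-t * ∑' n : ℕ,
          ‖Complex.Gamma (1 - ((σ : ℂ) + (t : ℂ) * Complex.I) / 2)‖ /
            ‖(σ : ℂ) + (t : ℂ) * Complex.I - 2 * ((n : ℂ) + 1)‖ ^ 2) t) ∧
    (∀ t : ℝ, 0 < t →
      -t * (∑' n : ℕ,
        ‖Complex.Gamma (1 - ((σ : ℂ) + (t : ℂ) * Complex.I) / 2)‖ /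
          ‖(σ : ℂ) + (t : ℂ) * Complex.I - 2 * ((n : ℂ) + 1)‖ ^ 2) < 0) ∧
    (∀ t : ℝ, t < 0 →
      0 < -t * (∑' n : ℕ,
        ‖Complex.Gamma (1 - ((σ : ℂ) + (t : ℂ) * Complex.I) / 2)‖ /
          ‖(σ : ℂ) + (t : ℂ) * Complex.I - 2 * ((n : ℂ) + 1)‖ ^ 2)) ∧
    StrictAntiOn (fun t : ℝ => ‖Complex.Gamma (1 - ((σ : ℂ) + (t : ℂ) * Complex.I) / 2)‖)
      (Set.Ioi 0) ∧
    StrictMonoOn (fun t : ℝ => ‖Complex.Gamma (1 - ((σ : ℂ) + (t : ℂ) * Complex.I) / 2)‖)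
      (Set.Iio 0) := by
  have hderiv := fun t (ht : t ≠ 0) => hasDerivAt_norm_Gamma_one_sub_half σ ht
  have hneg := fun t (ht : 0 < t) =>
    mul_neg_of_neg_of_pos (neg_neg_of_pos ht) (tsum_norm_Gamma_div_pos σ ht.ne')
  have hpos := fun t (ht : t < 0) => mul_pos (neg_pos.2 ht) (tsum_norm_Gamma_div_pos σ ht.ne)
  refine ⟨hderiv, hneg, hpos, ?_, ?_⟩
  · refine strictAntiOn_of_deriv_neg (convex_Ioi 0)
      (fun t ht => (hderiv t ht.ne').continuousAt.continuousWithinAt) fun t ht => ?_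
    rw [interior_Ioi] at ht
    exact (hderiv t ht.ne').deriv ▸ hneg t ht
  · refine strictMonoOn_of_deriv_pos (convex_Iio 0)
      (fun t ht => (hderiv t ht.ne).continuousAt.continuousWithinAt) fun t ht => ?_
    rw [interior_Iio] at ht
    exact (hderiv t ht.ne).deriv ▸ hpos t ht
end

section
/- For every real σ and every real t ≠ 0, the function u ↦ ‖Γ((1 + σ + iu)/2)‖ is differentiable at t with derivative equal to -t · ∑_{n=1}^{∞} ‖Γ((1 + σ + it)/2)‖ / ‖σ + it + 2n - 1‖². In particular this derivative is negative for t > 0 and positive for t < 0, so t ↦ ‖Γ((1 + σ + it)/2)‖ is strictly decreasing on (0, ∞) and strictly increasing on (-∞, 0). -/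
/-!
Put `z = (1 + σ + i t) / 2` and `ψ = Γ' / Γ`. By the chain rule,
`d/dt ‖Γ(z)‖ = ‖Γ(z)‖ · Re (ψ(z) · i / 2) = -‖Γ(z)‖ · Im ψ(z) / 2`, so everything rests on the
series `Im ψ(z) = Im z · ∑ₙ 1 / |z + n|²`, which has the sign of `Im z = t / 2`. For `Re z > 0`
the series comes from differentiating Euler's limit `Γ = lim GammaSeq`: the limit is locally
uniform on the right half-plane (dominated convergence in the Euler integral, using
`(1 - x/n)^n ≤ e^{-x}`), and `Im` of `logDeriv (GammaSeq · n)` is exactly a partial sum. The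
recurrence `ψ(z + 1) = ψ(z) + 1/z` then extends it to every `z` that is not a pole.
-/

open Complex Filter MeasureTheory Set Topology
open scoped ComplexConjugate RealInnerProductSpace

noncomputable def expNegApprox (n : ℕ) : ℝ → ℝ :=
  indicator (Ioc 0 (n : ℝ)) fun x => (1 - x / n) ^ n

lemma expNegApprox_nonneg (n : ℕ) (x : ℝ) : 0 ≤ expNegApprox n x :=
  indicator_nonneg
    (fun _ hx => pow_nonneg (sub_nonneg.2 (div_le_one_of_le₀ hx.2 n.cast_nonneg)) n) x

lemma expNegApprox_le_exp_neg (n : ℕ) (x : ℝ) : expNegApprox n x ≤ Real.exp (-x) :=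
  indicator_le' (fun _ hx => Real.one_sub_div_pow_le_exp_neg hx.2)
    (fun _ _ => (Real.exp_pos _).le) x

lemma measurable_expNegApprox (n : ℕ) : Measurable (expNegApprox n) :=
  (by fun_prop : Measurable fun x : ℝ => (1 - x / n) ^ n).indicator measurableSet_Ioc

lemma tendsto_expNegApprox {x : ℝ} (hx : 0 < x) :
    Tendsto (expNegApprox · x) atTop (𝓝 (Real.exp (-x))) := by
  refine (Real.tendsto_one_add_div_pow_exp (-x)).congr' ?_
  filter_upwards [eventually_ge_atTop ⌈x⌉₊] with n hn
  rw [expNegApprox, indicator_of_mem (show x ∈ Ioc (0 : ℝ) n from ⟨hx, Nat.ceil_le.1 hn⟩),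
    neg_div, ← sub_eq_add_neg]

section Weight

variable {w : ℝ → ℝ}

lemma norm_exp_neg_sub_expNegApprox_mul_le (hw0 : ∀ x, 0 < x → 0 ≤ w x) (n : ℕ) :
    ∀ᵐ x ∂volume.restrict (Ioi 0),
      ‖(Real.exp (-x) - expNegApprox n x) * w x‖ ≤ Real.exp (-x) * w x := by
  refine (ae_restrict_iff' measurableSet_Ioi).2 (ae_of_all _ fun x hx => ?_)
  rw [Real.norm_of_nonneg (mul_nonneg (sub_nonneg.2 (expNegApprox_le_exp_neg n x)) (hw0 x hx))]
  exact mul_le_mul_of_nonneg_right (sub_le_self _ (expNegApprox_nonneg n x)) (hw0 x hx)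

lemma integrableOn_exp_neg_sub_expNegApprox_mul (hwm : Measurable w)
    (hw0 : ∀ x, 0 < x → 0 ≤ w x) (hw : IntegrableOn (fun x => Real.exp (-x) * w x) (Ioi 0))
    (n : ℕ) : IntegrableOn (fun x => (Real.exp (-x) - expNegApprox n x) * w x) (Ioi 0) :=
  hw.mono' (((by fun_prop : Measurable fun x : ℝ => Real.exp (-x)).sub
    (measurable_expNegApprox n)).mul hwm).aestronglyMeasurable
    (norm_exp_neg_sub_expNegApprox_mul_le hw0 n)

lemma tendsto_integral_exp_neg_sub_expNegApprox_mul (hwm : Measurable w)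
    (hw0 : ∀ x, 0 < x → 0 ≤ w x) (hw : IntegrableOn (fun x => Real.exp (-x) * w x) (Ioi 0)) :
    Tendsto (fun n : ℕ => ∫ x in Ioi 0, (Real.exp (-x) - expNegApprox n x) * w x) atTop
      (𝓝 0) := by
  have hlim : ∀ᵐ x ∂volume.restrict (Ioi 0),
      Tendsto (fun n : ℕ => (Real.exp (-x) - expNegApprox n x) * w x) atTop (𝓝 0) := by
    refine (ae_restrict_iff' measurableSet_Ioi).2 (ae_of_all _ fun x hx => ?_)
    simpa using ((tendsto_const_nhds (x := Real.exp (-x))).sub (tendsto_expNegApprox hx)).mul_const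
      (w x)
  simpa using tendsto_integral_of_dominated_convergence _
    (fun n => (integrableOn_exp_neg_sub_expNegApprox_mul hwm hw0 hw n).aestronglyMeasurable) hw
    (norm_exp_neg_sub_expNegApprox_mul_le hw0) hlim

end Weight

lemma Real.rpow_le_rpow_add_rpow {x a b c : ℝ} (hx : 0 < x) (hac : a ≤ c) (hcb : c ≤ b) :
    x ^ c ≤ x ^ a + x ^ b := by
  rcases le_total x 1 with h | h
  · linarith [Real.rpow_le_rpow_of_exponent_ge hx h hac, Real.rpow_nonneg hx.le b]
  · linarith [Real.rpow_le_rpow_of_exponent_le h hcb, Real.rpow_nonneg hx.le a]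

theorem HasDerivAt.norm {F : Type*} [NormedAddCommGroup F] [InnerProductSpace ℝ F] {f : ℝ → F}
    {f' : F} {x : ℝ} (hf : HasDerivAt f f' x) (h0 : f x ≠ 0) :
    HasDerivAt (‖f ·‖) (⟪f x, f'⟫ / ‖f x‖) x := by
  have h := hf.norm_sq.sqrt (by positivity)
  simp only [Real.sqrt_sq (norm_nonneg _)] at h
  convert h using 1
  field_simp

namespace Complex

lemma ne_neg_natCast_of_im_ne_zero {w : ℂ} (hw : w.im ≠ 0) (m : ℕ) : w ≠ -m := by
  rintro rfl
  simp at hw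

lemma GammaSeq_eq_integral_expNegApprox {s : ℂ} (hs : 0 < s.re) {n : ℕ} (hn : n ≠ 0) :
    GammaSeq s n = ∫ x in Ioi 0, (expNegApprox n x : ℂ) * (x : ℂ) ^ (s - 1) := by
  have hind : (fun x : ℝ => (expNegApprox n x : ℂ) * (x : ℂ) ^ (s - 1)) =
      indicator (Ioc 0 (n : ℝ)) fun x => (((1 - x / n) ^ n : ℝ) : ℂ) * (x : ℂ) ^ (s - 1) := by
    ext x
    by_cases h : x ∈ Ioc (0 : ℝ) n <;> simp [expNegApprox, h]
  rw [GammaSeq_eq_approx_Gamma_integral hs hn, intervalIntegral.integral_of_le n.cast_nonneg,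
    hind, integral_indicator measurableSet_Ioc,
    Measure.restrict_restrict_of_subset Ioc_subset_Ioi_self]

lemma norm_Gamma_sub_GammaSeq_le {s : ℂ} (hs : 0 < s.re) {n : ℕ} (hn : n ≠ 0) {w : ℝ → ℝ}
    (hwm : Measurable w) (hws : ∀ x, 0 < x → x ^ (s.re - 1) ≤ w x)
    (hw : IntegrableOn (fun x => Real.exp (-x) * w x) (Ioi 0)) :
    ‖Gamma s - GammaSeq s n‖ ≤ ∫ x in Ioi 0, (Real.exp (-x) - expNegApprox n x) * w x := by
  have hw0 : ∀ x, 0 < x → 0 ≤ w x := fun x hx => (Real.rpow_nonneg hx.le _).trans (hws x hx)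
  have hGammaSeq :
      IntegrableOn (fun x : ℝ => (expNegApprox n x : ℂ) * (x : ℂ) ^ (s - 1)) (Ioi 0) :=
    Integrable.mono (GammaIntegral_convergent hs)
      (((measurable_ofReal.comp (measurable_expNegApprox n)).mul
        (measurable_ofReal.pow_const _)).aestronglyMeasurable)
      (ae_of_all _ fun x => by
        simp only [norm_mul, norm_real, Real.norm_of_nonneg (expNegApprox_nonneg n x),
          Real.norm_of_nonneg (Real.exp_pos _).le]
        exact mul_le_mul_of_nonneg_right (expNegApprox_le_exp_neg n x) (norm_nonneg _))
  rw [Gamma_eq_integral hs, GammaSeq_eq_integral_expNegApprox hs hn, GammaIntegral,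
    ← integral_sub (GammaIntegral_convergent hs) hGammaSeq]
  refine norm_integral_le_of_norm_le (integrableOn_exp_neg_sub_expNegApprox_mul hwm hw0 hw n)
    ((ae_restrict_iff' measurableSet_Ioi).2 (ae_of_all _ fun x hx => ?_))
  rw [← sub_mul, ← ofReal_sub, norm_mul, norm_real, norm_cpow_eq_rpow_re_of_pos hx,
    Real.norm_of_nonneg (sub_nonneg.2 (expNegApprox_le_exp_neg n x)), sub_re, one_re]
  exact mul_le_mul_of_nonneg_left (hws x hx) (sub_nonneg.2 (expNegApprox_le_exp_neg n x))

theorem tendstoUniformlyOn_GammaSeq {a b : ℝ} (ha : 0 < a) (hb : 0 < b) :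
    TendstoUniformlyOn (fun n s => GammaSeq s n) Gamma atTop {s | a ≤ s.re ∧ s.re ≤ b} := by
  have hwm : Measurable fun x : ℝ => x ^ (a - 1) + x ^ (b - 1) := by fun_prop
  have hw : IntegrableOn (fun x : ℝ => Real.exp (-x) * (x ^ (a - 1) + x ^ (b - 1))) (Ioi 0) :=
    ((Real.GammaIntegral_convergent ha).add (Real.GammaIntegral_convergent hb)).congr
      (ae_of_all _ fun x => (mul_add _ _ _).symm)
  rw [Metric.tendstoUniformlyOn_iff]
  intro ε hε
  filter_upwards [(tendsto_integral_exp_neg_sub_expNegApprox_mul hwm (fun x hx => by positivity)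
    hw).eventually_lt_const hε, eventually_ne_atTop 0] with n hlt hn s hs
  rw [dist_eq_norm]
  refine (norm_Gamma_sub_GammaSeq_le (ha.trans_le hs.1) hn hwm (fun x hx => ?_) hw).trans_lt hlt
  exact Real.rpow_le_rpow_add_rpow hx (by linarith [hs.1]) (by linarith [hs.2])

theorem tendstoLocallyUniformlyOn_GammaSeq :
    TendstoLocallyUniformlyOn (fun n s => GammaSeq s n) Gamma atTop {s | 0 < s.re} := by
  refine tendstoLocallyUniformlyOn_of_forall_exists_nhds fun s (hs : 0 < s.re) => ?_
  refine ⟨{z | s.re / 2 ≤ z.re ∧ z.re ≤ s.re + 1}, mem_nhdsWithin_of_mem_nhds ?_,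
    tendstoUniformlyOn_GammaSeq (by positivity) (by positivity)⟩
  exact continuous_re.continuousAt.preimage_mem_nhds (Icc_mem_nhds (by linarith) (by linarith))

lemma differentiableAt_GammaSeq {n : ℕ} (hn : n ≠ 0) {s : ℂ} (hs : ∀ j : ℕ, s + j ≠ 0) :
    DifferentiableAt ℂ (GammaSeq · n) s :=
  (((hasDerivAt_id s).const_cpow (Or.inl (Nat.cast_ne_zero.2 hn))).differentiableAt.mul_const
    _).div (by fun_prop) (Finset.prod_ne_zero_iff.2 fun j _ => hs j)

lemma logDeriv_GammaSeq {n : ℕ} (hn : n ≠ 0) {s : ℂ} (hs : ∀ j : ℕ, s + j ≠ 0) :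
    logDeriv (GammaSeq · n) s = Real.log n - ∑ j ∈ Finset.range (n + 1), (s + j)⁻¹ := by
  have hn' : (n : ℂ) ≠ 0 := Nat.cast_ne_zero.2 hn
  have hpow : HasDerivAt (fun z : ℂ => (n : ℂ) ^ z) ((n : ℂ) ^ s * log n) s := by
    simpa using (hasDerivAt_id s).const_cpow (Or.inl hn')
  have hpow0 : (n : ℂ) ^ s ≠ 0 := cpow_ne_zero_iff.2 (Or.inl hn')
  have hfac : (n.factorial : ℂ) ≠ 0 := by exact_mod_cast n.factorial_ne_zero
  rw [show (GammaSeq · n) =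
      fun z : ℂ => (n : ℂ) ^ z * n.factorial / ∏ j ∈ Finset.range (n + 1), (z + j) from rfl,
    logDeriv_div (f := fun z : ℂ => (n : ℂ) ^ z * n.factorial)
      (g := fun z : ℂ => ∏ j ∈ Finset.range (n + 1), (z + j)) s (mul_ne_zero hpow0 hfac)
      (Finset.prod_ne_zero_iff.2 fun j _ => hs j) (hpow.differentiableAt.mul_const _)
      (by fun_prop),
    logDeriv_mul_const s _ hfac, logDeriv_prod (fun j _ => hs j) (fun j _ => by fun_prop),
    logDeriv_apply, hpow.deriv, mul_div_cancel_left₀ _ hpow0, ofReal_log n.cast_nonneg]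
  simp [logDeriv_apply]

lemma summable_inv_normSq_add_nat (w : ℂ) : Summable fun n : ℕ => (normSq (w + n))⁻¹ := by
  refine ((Real.summable_one_div_nat_add_rpow w.re 2).2 one_lt_two).of_norm_bounded_eventually_nat
    ?_
  filter_upwards [eventually_gt_atTop ⌈-w.re⌉₊] with n hn
  have hpos : 0 < n + w.re := by linarith [Nat.lt_of_ceil_lt hn]
  rw [norm_inv, Real.norm_of_nonneg (normSq_nonneg _), one_div, Real.rpow_two, abs_of_pos hpos]
  refine inv_anti₀ (by positivity) ?_
  rw [normSq_apply]
  simp only [add_re, natCast_re, add_im, natCast_im, add_zero]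
  nlinarith [mul_self_nonneg w.im]

theorem hasSum_im_digamma_of_re_pos {w : ℂ} (hw : 0 < w.re) :
    HasSum (fun n : ℕ => w.im / normSq (w + n)) (digamma w).im := by
  have hU : IsOpen {s : ℂ | 0 < s.re} := isOpen_lt continuous_const continuous_re
  have hne : ∀ s : ℂ, 0 < s.re → ∀ j : ℕ, s + j ≠ 0 := fun s hs j h => by
    have h0 : (s + j).re = 0 := by rw [h, zero_re]
    linarith [show (s + j).re = s.re + j by simp, j.cast_nonneg (α := ℝ)]
  have hdiff : ∀ᶠ n : ℕ in atTop, DifferentiableOn ℂ (GammaSeq · n) {s | 0 < s.re} := by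
    filter_upwards [eventually_ne_atTop 0] with n hn s hs
    exact (differentiableAt_GammaSeq hn (hne s hs)).differentiableWithinAt
  have hlim : Tendsto (fun n : ℕ => (logDeriv (GammaSeq · n) w).im) atTop
      (𝓝 (digamma w).im) :=
    (continuous_im.tendsto _).comp (logDeriv_tendsto hU hw tendstoLocallyUniformlyOn_GammaSeq
      hdiff (Gamma_ne_zero_of_re_pos hw))
  have hpartial : ∀ᶠ n : ℕ in atTop, (logDeriv (GammaSeq · n) w).im =
      ∑ j ∈ Finset.range (n + 1), w.im / normSq (w + j) := by
    filter_upwards [eventually_ne_atTop 0] with n hn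
    rw [logDeriv_GammaSeq hn (hne w hw), sub_im, ofReal_im, im_sum, zero_sub,
      ← Finset.sum_neg_distrib]
    simp [inv_im, neg_div]
  have hsum : Summable fun n : ℕ => w.im / normSq (w + n) := by
    simpa [div_eq_mul_inv] using (summable_inv_normSq_add_nat w).mul_left w.im
  convert hsum.hasSum
  exact tendsto_nhds_unique (hlim.congr' hpartial)
    ((hsum.hasSum.tendsto_sum_nat).comp (tendsto_add_atTop_nat 1))

theorem hasSum_im_digamma {w : ℂ} (hw : ∀ m : ℕ, w ≠ -m) :
    HasSum (fun n : ℕ => w.im / normSq (w + n)) (digamma w).im := by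
  obtain ⟨k, hk⟩ := exists_nat_gt (-w.re)
  induction k generalizing w with
  | zero => exact hasSum_im_digamma_of_re_pos (by simpa using hk)
  | succ k ih =>
    have hw1 : ∀ m : ℕ, w + 1 ≠ -m := fun m h => hw (m + 1) (by push_cast; linear_combination h)
    have hshift := ih hw1 (by simp only [add_re, one_re]; push_cast at hk; linarith)
    have hterm : (fun n : ℕ => (w + 1).im / normSq (w + 1 + n)) =
        fun n => w.im / normSq (w + (n + 1 : ℕ)) := by
      ext n
      rw [add_im, one_im, add_zero, add_assoc]
      push_cast
      ring_nf
    have hval : (digamma (w + 1)).im =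
        (digamma w).im - ∑ i ∈ Finset.range 1, w.im / normSq (w + i) := by
      simp [digamma_apply_add_one w hw, inv_im, neg_div, sub_eq_add_neg]
    rw [hterm, hval] at hshift
    exact (hasSum_nat_add_iff' 1).1 hshift

theorem hasDerivAt_norm_Gamma_comp {g : ℝ → ℂ} {g' : ℂ} {t : ℝ} (hg : HasDerivAt g g' t)
    (hgt : ∀ m : ℕ, g t ≠ -m) :
    HasDerivAt (fun u => ‖Gamma (g u)‖) (‖Gamma (g t)‖ * (digamma (g t) * g').re) t := by
  have hΓ0 := Gamma_ne_zero hgt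
  have hΓ : HasDerivAt Gamma (digamma (g t) * Gamma (g t)) (g t) := by
    rw [digamma_def, logDeriv_apply, div_mul_cancel₀ _ hΓ0]
    exact (differentiableAt_Gamma _ hgt).hasDerivAt
  convert (hΓ.comp t hg).norm hΓ0 using 1
  · rfl
  rw [Complex.inner, Function.comp_apply,
    show digamma (g t) * Gamma (g t) * g' * conj (Gamma (g t)) =
      digamma (g t) * g' * (Gamma (g t) * conj (Gamma (g t))) by ring,
    mul_conj, normSq_eq_norm_sq, re_mul_ofReal]
  field_simp [norm_ne_zero_iff.2 hΓ0]

end Complex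

lemma hasSum_norm_Gamma_div_norm_sq {σ t : ℝ} (ht : t ≠ 0) :
    HasSum (fun n : ℕ => ‖Gamma ((1 + σ + t * I) / 2)‖ /
        ‖(σ : ℂ) + t * I + 2 * ((n : ℂ) + 1) - 1‖ ^ 2)
      (‖Gamma ((1 + σ + t * I) / 2)‖ * (digamma ((1 + σ + t * I) / 2)).im / (2 * t)) := by
  set z : ℂ := (1 + σ + t * I) / 2
  have hz : z.im = t / 2 := by simp [z]
  have hz0 : ∀ m : ℕ, z ≠ -m :=
    ne_neg_natCast_of_im_ne_zero (by rw [hz]; exact div_ne_zero ht two_ne_zero)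
  rw [show ‖Gamma z‖ * (digamma z).im / (2 * t) = ‖Gamma z‖ / (2 * t) * (digamma z).im by ring]
  refine ((hasSum_im_digamma hz0).mul_left _).congr_fun fun n => ?_
  rw [show (σ : ℂ) + t * I + 2 * ((n : ℂ) + 1) - 1 = 2 * (z + n) by ring, norm_mul, mul_pow,
    Complex.sq_norm (z + n), hz]
  field_simp
  norm_num

theorem hasDerivAt_norm_Gamma_vertical (σ : ℝ) {t : ℝ} (ht : t ≠ 0) :
    HasDerivAt (fun u : ℝ => ‖Gamma ((1 + σ + u * I) / 2)‖)
      (-t * ∑' n : ℕ, ‖Gamma ((1 + σ + t * I) / 2)‖ /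
        ‖(σ : ℂ) + t * I + 2 * ((n : ℂ) + 1) - 1‖ ^ 2) t := by
  have hpath : HasDerivAt (fun u : ℝ => (1 + σ + u * I) / 2) (I / 2) t := by
    simpa using (((hasDerivAt_id t).ofReal_comp.mul_const I).const_add (1 + (σ : ℂ))).div_const 2
  convert hasDerivAt_norm_Gamma_comp hpath (ne_neg_natCast_of_im_ne_zero (by simpa using ht))
    using 1
  rw [(hasSum_norm_Gamma_div_norm_sq ht).tsum_eq, mul_re, div_ofNat_re, div_ofNat_im, I_re, I_im]
  field_simp
  ring

theorem tsum_norm_Gamma_div_norm_sq_pos (σ : ℝ) {t : ℝ} (ht : t ≠ 0) :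
    0 < ∑' n : ℕ, ‖Gamma ((1 + σ + t * I) / 2)‖ /
      ‖(σ : ℂ) + t * I + 2 * ((n : ℂ) + 1) - 1‖ ^ 2 := by
  refine (hasSum_norm_Gamma_div_norm_sq ht).summable.tsum_pos (fun n => by positivity) 0 ?_
  have hΓ : Gamma ((1 + σ + t * I) / 2) ≠ 0 :=
    Gamma_ne_zero (ne_neg_natCast_of_im_ne_zero (by simpa using ht))
  have h0 : (σ : ℂ) + t * I + 2 * (((0 : ℕ) : ℂ) + 1) - 1 ≠ 0 := fun h =>
    ht (by simpa using congrArg im h)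
  positivity

theorem stmt_10 (σ : ℝ) :
    (∀ t : ℝ, t ≠ 0 →
      HasDerivAt (fun u : ℝ => ‖Complex.Gamma ((1 + (σ : ℂ) + (u : ℂ) * Complex.I) / 2)‖)
        (-t * ∑' n : ℕ,
          ‖Complex.Gamma ((1 + (σ : ℂ) + (t : ℂ) * Complex.I) / 2)‖ /
            ‖(σ : ℂ) + (t : ℂ) * Complex.I + 2 * ((n : ℂ) + 1) - 1‖ ^ 2) t) ∧
    (∀ t : ℝ, 0 < t →
      -t * (∑' n : ℕ,
        ‖Complex.Gamma ((1 + (σ : ℂ) + (t : ℂ) * Complex.I) / 2)‖ /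
          ‖(σ : ℂ) + (t : ℂ) * Complex.I + 2 * ((n : ℂ) + 1) - 1‖ ^ 2) < 0) ∧
    (∀ t : ℝ, t < 0 →
      0 < -t * (∑' n : ℕ,
        ‖Complex.Gamma ((1 + (σ : ℂ) + (t : ℂ) * Complex.I) / 2)‖ /
          ‖(σ : ℂ) + (t : ℂ) * Complex.I + 2 * ((n : ℂ) + 1) - 1‖ ^ 2)) ∧
    StrictAntiOn (fun t : ℝ => ‖Complex.Gamma ((1 + (σ : ℂ) + (t : ℂ) * Complex.I) / 2)‖)
      (Set.Ioi 0) ∧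
    StrictMonoOn (fun t : ℝ => ‖Complex.Gamma ((1 + (σ : ℂ) + (t : ℂ) * Complex.I) / 2)‖)
      (Set.Iio 0) := by
  have hderiv := fun t (ht : t ≠ 0) => hasDerivAt_norm_Gamma_vertical σ ht
  have hneg : ∀ t : ℝ, 0 < t → -t * _ < 0 := fun t ht =>
    mul_neg_of_neg_of_pos (neg_neg_of_pos ht) (tsum_norm_Gamma_div_norm_sq_pos σ ht.ne')
  have hpos : ∀ t : ℝ, t < 0 → 0 < -t * _ := fun t ht =>
    mul_pos (neg_pos.2 ht) (tsum_norm_Gamma_div_norm_sq_pos σ ht.ne)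
  refine ⟨hderiv, hneg, hpos, ?_, ?_⟩
  · exact strictAntiOn_of_hasDerivWithinAt_neg (convex_Ioi 0)
      (fun x hx => (hderiv x (ne_of_gt hx)).continuousAt.continuousWithinAt)
      (fun x hx => (hderiv x (ne_of_gt (interior_subset hx))).hasDerivWithinAt)
      (fun x hx => hneg x (interior_subset hx))
  · exact strictMonoOn_of_hasDerivWithinAt_pos (convex_Iio 0)
      (fun x hx => (hderiv x (ne_of_lt hx)).continuousAt.continuousWithinAt)
      (fun x hx => (hderiv x (ne_of_lt (interior_subset hx : x ∈ Iio 0))).hasDerivWithinAt)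
      (fun x hx => hpos x (interior_subset hx : x ∈ Iio 0))
end

section
/- For every real σ < 1/2, ‖X(σ + it)‖ tends to +∞ as t → +∞. -/
/-!
Put `z = (1 + σ)/2 + (t/2) i` and `δ = 1/2 - σ > 0`. Then `1 - s/2 = conj (z + δ)`, so
`‖X(σ + it)‖ = (5/π)^(1/2 - σ) ‖Γ(z + δ) / Γ(z)‖`, and it suffices that `Γ(z) / Γ(z + δ) → 0`
along the vertical line. For `Re z > 0` this ratio is `B(z, δ) / Γ(δ)`, and `B(·, δ)` is the
Mellin transform of `x ↦ (1 - x)^(δ - 1)` on `(0, 1]`; after the substitution `x = e^(-v)` a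
Mellin transform on a vertical line is a Fourier transform, so it tends to `0` by the
Riemann–Lebesgue lemma. The recurrence `Γ(z + 1) = z Γ(z)` and `(z + δ) / z → 1` remove the
condition `Re z > 0`.
-/

open Complex Filter Set Bornology MeasureTheory
open scoped Topology Real ComplexConjugate

theorem tendsto_mellin_add_mul_I_atTop {E : Type*} [NormedAddCommGroup E] [NormedSpace ℂ E]
    (f : ℝ → E) (s : ℂ) : Tendsto (fun u : ℝ => mellin f (s + u * I)) atTop (𝓝 0) := by
  have hfreq : Tendsto (fun u : ℝ => (s.im + u) / (2 * π)) atTop (cocompact ℝ) :=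
    ((tendsto_atTop_add_const_left _ _ tendsto_id).atTop_div_const (by positivity)).mono_right
      (by rw [cocompact_eq_atBot_atTop]; exact le_sup_right)
  simpa [mellin_eq_fourier, Function.comp_def] using (Real.zero_at_infty_fourier _).comp hfreq

theorem betaIntegral_eq_mellin (u v : ℂ) :
    betaIntegral u v = mellin ((Iic 1).indicator fun x : ℝ => (1 - (x : ℂ)) ^ (v - 1)) u := by
  rw [betaIntegral, intervalIntegral.integral_of_le zero_le_one, mellin, ← Ioi_inter_Iic,
    ← setIntegral_indicator measurableSet_Iic]
  simp only [indicator_apply, smul_eq_mul, mul_ite, mul_zero]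

theorem tendsto_add_mul_I_cobounded (s : ℂ) :
    Tendsto (fun u : ℝ => s + u * I) atTop (cobounded ℂ) := by
  rw [← tendsto_norm_atTop_iff_cobounded]
  refine tendsto_atTop_mono (fun u => (le_abs_self _).trans (abs_im_le_norm (s + u * I))) ?_
  simpa using tendsto_atTop_add_const_left _ s.im tendsto_id

theorem tendsto_add_div_self_of_tendsto_cobounded {α 𝕜 : Type*} [NormedField 𝕜] {l : Filter α}
    {f : α → 𝕜} (hf : Tendsto f l (cobounded 𝕜)) (δ : 𝕜) :
    Tendsto (fun x => (f x + δ) / f x) l (𝓝 1) := by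
  have hinv := (tendsto_inv₀_cobounded.comp hf).const_mul δ
  rw [mul_zero] at hinv
  refine (by simpa using hinv.const_add 1 : Tendsto (fun x => 1 + δ * (f x)⁻¹) l (𝓝 1)).congr' ?_
  filter_upwards [hf.eventually_ne_cobounded 0] with x hx
  simp [field]

theorem eventually_Gamma_add_mul_I_ne_zero (s : ℂ) :
    ∀ᶠ u : ℝ in atTop, Gamma (s + u * I) ≠ 0 := by
  filter_upwards [eventually_gt_atTop (-s.im)] with u hu
  refine Gamma_ne_zero fun m hm => ?_
  have him := congrArg im hm
  simp only [add_im, mul_im, ofReal_re, I_im, ofReal_im, I_re, neg_im, natCast_im] at him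
  linarith

theorem tendsto_Gamma_div_Gamma_add_of_re_pos {s δ : ℂ} (hs : 0 < s.re) (hδ : 0 < δ.re) :
    Tendsto (fun u : ℝ => Gamma (s + u * I) / Gamma (s + u * I + δ)) atTop (𝓝 0) := by
  have hbeta : ∀ u : ℝ, Gamma (s + u * I) / Gamma (s + u * I + δ) =
      betaIntegral (s + u * I) δ / Gamma δ := fun u => by
    rw [betaIntegral_eq_Gamma_mul_div _ _ (by simpa using hs) hδ,
      mul_div_right_comm, mul_div_cancel_right₀ _ (Gamma_ne_zero_of_re_pos hδ)]
  simp_rw [hbeta, betaIntegral_eq_mellin]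
  simpa using (tendsto_mellin_add_mul_I_atTop _ s).div_const (Gamma δ)

theorem tendsto_Gamma_div_Gamma_add {δ : ℂ} (hδ : 0 < δ.re) (s : ℂ) :
    Tendsto (fun u : ℝ => Gamma (s + u * I) / Gamma (s + u * I + δ)) atTop (𝓝 0) := by
  obtain ⟨n, hn⟩ := exists_nat_gt (-s.re)
  induction n generalizing s with
  | zero => exact tendsto_Gamma_div_Gamma_add_of_re_pos (by simpa using hn) hδ
  | succ n ih =>
    have hshift := (ih (s + 1) (by push_cast at hn; simp; linarith)).mul
      (tendsto_add_div_self_of_tendsto_cobounded (tendsto_add_mul_I_cobounded s) δ)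
    rw [zero_mul] at hshift
    refine hshift.congr' ?_
    filter_upwards [(tendsto_add_mul_I_cobounded s).eventually_ne_cobounded 0,
      (tendsto_add_mul_I_cobounded (s + δ)).eventually_ne_cobounded 0] with u hz hzδ
    rw [add_right_comm] at hzδ
    rw [add_right_comm s 1, Gamma_add_one _ hz, add_right_comm _ 1, Gamma_add_one _ hzδ]
    field_simp

theorem tendsto_norm_Gamma_add_div_Gamma_atTop {δ : ℂ} (hδ : 0 < δ.re) (s : ℂ) :
    Tendsto (fun u : ℝ => ‖Gamma (s + u * I + δ) / Gamma (s + u * I)‖) atTop atTop := by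
  have hne : ∀ᶠ u : ℝ in atTop, Gamma (s + u * I) / Gamma (s + u * I + δ) ≠ 0 := by
    filter_upwards [eventually_Gamma_add_mul_I_ne_zero s,
      eventually_Gamma_add_mul_I_ne_zero (s + δ)] with u hz hzδ
    rw [add_right_comm] at hzδ
    exact div_ne_zero hz hzδ
  have hratio : Tendsto (fun u : ℝ => Gamma (s + u * I) / Gamma (s + u * I + δ)) atTop (𝓝[≠] 0) :=
    tendsto_nhdsWithin_iff.2 ⟨tendsto_Gamma_div_Gamma_add hδ s, hne⟩
  simpa only [Function.comp_def, inv_div] using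
    tendsto_norm_cobounded_atTop.comp (tendsto_inv₀_nhdsNE_zero.comp hratio)

theorem norm_X_ofReal_add_mul_I (σ t : ℝ) :
    ‖X (σ + t * I)‖ = (5 / π) ^ (1 / 2 - σ) *
      ‖Gamma ((1 + σ) / 2 + (t / 2 : ℝ) * I + (1 / 2 - σ)) /
        Gamma ((1 + σ) / 2 + (t / 2 : ℝ) * I)‖ := by
  have hconj : 1 - (σ + t * I) / 2 = conj ((1 + σ) / 2 + (t / 2 : ℝ) * I + (1 / 2 - σ : ℂ)) := by
    simp only [map_add, map_sub, map_div₀, map_one, map_ofNat, map_mul, conj_ofReal, conj_I]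
    push_cast
    ring
  have hbase : (5 / π : ℂ) = ((5 / π : ℝ) : ℂ) := by push_cast; rfl
  rw [X, hconj, Gamma_conj, hbase, norm_div, norm_mul, norm_cpow_eq_rpow_re_of_pos (by positivity),
    RCLike.norm_conj, mul_div_assoc, norm_div]
  congr 5
  · simp
  · push_cast; ring

theorem stmt_13 (σ : ℝ) (hσ : σ < 1 / 2) :
    Filter.Tendsto (fun t : ℝ => ‖X ((σ : ℂ) + (t : ℂ) * Complex.I)‖)
      Filter.atTop Filter.atTop := by
  have hδ : 0 < (1 / 2 - σ : ℂ).re := by simpa using hσ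
  have hc : 0 < (5 / π) ^ (1 / 2 - σ) := by positivity
  simp_rw [norm_X_ofReal_add_mul_I]
  exact ((tendsto_norm_Gamma_add_div_Gamma_atTop hδ _).comp
    (tendsto_id.atTop_div_const two_pos)).const_mul_atTop hc
end
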